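/- Let k ≥ 1, n ≥ 2, and C = (c_0,…,c_k) ∈ {0,1}^{k+1} with c_0 = 1. Set λ' = ∑_{j=2}^{n} F_j(C') and, for a positive integer M_1, set M' = ⌈e·λ'⌉ + M_1. Then ∑_{m=1}^{n−M'} O^u_C(n, m) ≤ n!^k · exp(−M_1). -/

import Mathlib

/-- `F j C = ∑_{β=0}^{k} C(k,β) · c_β / (j−1)^β`. -/
def F (k : ℕ) (C : ℕ → ℕ) (j : ℕ) : ℚ :=
  ∑ β ∈ Finset.range (k + 1), (k.choose β : ℚ) * (C β : ℚ) / ((j : ℚ) - 1) ^ β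

/-- The unsigned `C` sequential optimization numbers `O^u_C(n, m)`. -/
def Ou (k : ℕ) (C : ℕ → ℕ) (n : ℕ) (m : ℤ) : ℚ :=
  if 1 ≤ m ∧ m ≤ (n : ℤ) then
    ((n - 1).factorial : ℚ) ^ k *
      ∑ S ∈ (Finset.Icc 2 n).powersetCard (m.toNat - 1),
        (∏ j ∈ S, F k C j) * ∏ j ∈ Finset.Icc 2 n \ S, F k (fun β => 1 - C β) j
  else 0

/-- The `C` sequential optimization numbers `O_C(n, m) = O^u_C(n, m − c_k + 1)`. -/
def Oc (k : ℕ) (C : ℕ → ℕ) (n : ℕ) (m : ℤ) : ℚ :=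
  Ou k C n (m - C k + 1)

lemma F_nonneg (k : ℕ) (C : ℕ → ℕ) (j : ℕ) (hj : 2 ≤ j) : 0 ≤ F k C j := by
  apply Finset.sum_nonneg
  intro β _
  have : (1:ℚ) ≤ (j:ℚ) - 1 := by
    have : (2:ℚ) ≤ (j:ℚ) := by exact_mod_cast hj
    linarith
  positivity

lemma F_one_le (k : ℕ) (C : ℕ → ℕ) (j : ℕ) (hj : 2 ≤ j) (hC0 : C 0 = 1) :
    1 ≤ F k C j := by
  have h0 : (k.choose 0 : ℚ) * (C 0 : ℚ) / ((j : ℚ) - 1) ^ 0 = 1 := by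
    simp [hC0]
  calc (1:ℚ) = (k.choose 0 : ℚ) * (C 0 : ℚ) / ((j : ℚ) - 1) ^ 0 := h0.symm
    _ ≤ F k C j := by
        apply Finset.single_le_sum (f := fun β => (k.choose β : ℚ) * (C β : ℚ) / ((j : ℚ) - 1) ^ β)
        · intro β _
          have : (1:ℚ) ≤ (j:ℚ) - 1 := by
            have : (2:ℚ) ≤ (j:ℚ) := by exact_mod_cast hj
            linarith
          positivity
        · simp

lemma F_add (k : ℕ) (C : ℕ → ℕ) (hC : ∀ β ≤ k, C β ≤ 1) (j : ℕ) (hj : 2 ≤ j) :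
    F k C j + F k (fun β => 1 - C β) j = ((j:ℚ)/((j:ℚ)-1))^k := by
  have hd : (0:ℚ) < (j:ℚ) - 1 := by
    have : (2:ℚ) ≤ (j:ℚ) := by exact_mod_cast hj
    linarith
  unfold F
  rw [← Finset.sum_add_distrib]
  have : ∀ β ∈ Finset.range (k+1),
      (k.choose β : ℚ) * (C β : ℚ) / ((j : ℚ) - 1) ^ β
        + (k.choose β : ℚ) * ((1 - C β : ℕ) : ℚ) / ((j : ℚ) - 1) ^ β
      = (1/((j:ℚ)-1)) ^ β * 1 ^ (k - β) * (k.choose β : ℚ) := by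
    intro β hβ
    have hβk : β ≤ k := Nat.lt_succ_iff.mp (Finset.mem_range.mp hβ)
    have hcb : C β ≤ 1 := hC β hβk
    have : ((1 - C β : ℕ) : ℚ) = 1 - (C β : ℚ) := by
      push_cast [hcb]
      ring
    rw [this]
    rw [one_div_pow]
    ring
  rw [Finset.sum_congr rfl this, ← add_pow]
  congr 1
  field_simp
  ring

lemma telescope (n : ℕ) (hn : 1 ≤ n) :
    ∏ j ∈ Finset.Icc 2 n, ((j:ℚ)/((j:ℚ)-1)) = n := by
  induction n with
  | zero => omega
  | succ n ih =>
    rcases Nat.eq_or_lt_of_le hn with h | h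
    · simp [← h]
    · have hn1 : 1 ≤ n := by omega
      rw [Finset.prod_Icc_succ_top (by omega : 2 ≤ n + 1), ih hn1]
      have hn0 : ((n:ℚ)) ≠ 0 := by exact_mod_cast Nat.one_le_iff_ne_zero.mp hn1
      push_cast
      field_simp
      rw [add_sub_cancel_right, div_self hn0]

theorem stmt14 (k n : ℕ) (hk : 1 ≤ k) (hn : 2 ≤ n)
    (C : ℕ → ℕ) (hC : ∀ β ≤ k, C β ≤ 1) (hC0 : C 0 = 1)
    (M₁ : ℕ) (hM₁ : 1 ≤ M₁) (M' : ℕ)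
    (hM' : M' = ⌈Real.exp 1 *
        ((∑ j ∈ Finset.Icc 2 n, F k (fun β => 1 - C β) j : ℚ) : ℝ)⌉₊ + M₁) :
    ((∑ m ∈ Finset.Icc 1 (n - M'), Ou k C n (m : ℤ) : ℚ) : ℝ)
      ≤ (n.factorial : ℝ) ^ k * Real.exp (-(M₁ : ℝ)) := by
  have hRHSpos : (0:ℝ) < (n.factorial : ℝ) ^ k * Real.exp (-(M₁ : ℝ)) := by positivity
  by_cases hMn : n - M' = 0
  · rw [hMn]
    simp only [Finset.Icc_eq_empty_of_lt (by norm_num : (0:ℕ) < 1), Finset.sum_empty]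
    simpa using hRHSpos.le
  have hM'n : M' < n := by omega
  set T := Finset.Icc 2 n with hT
  set C' := (fun β => 1 - C β) with hC'
  have hTcard : T.card = n - 1 := by rw [hT, Nat.card_Icc]; omega
  set N := n - M' with hN
  -- rewrite each Ou
  have hOu : ∀ m ∈ Finset.Icc 1 N, Ou k C n (m:ℤ)
      = ((n - 1).factorial : ℚ) ^ k *
        ∑ S ∈ T.powersetCard (m - 1),
          (∏ j ∈ S, F k C j) * ∏ j ∈ T \ S, F k C' j := by
    intro m hm
    rw [Finset.mem_Icc] at hm
    rw [Ou, if_pos ⟨by exact_mod_cast hm.1, by exact_mod_cast le_trans hm.2 (Nat.sub_le n M')⟩]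
    norm_num
    exact Or.inl rfl
  rw [Finset.sum_congr rfl hOu, ← Finset.mul_sum]
  push_cast
  set a : ℕ → ℝ := fun j => ((F k C j : ℚ) : ℝ) with ha
  set b : ℕ → ℝ := fun j => ((F k C' j : ℚ) : ℝ) with hb
  set e : ℝ := Real.exp 1 with he
  have he1 : (1:ℝ) ≤ e := by
    rw [he]; have := Real.add_one_le_exp (1:ℝ); linarith
  have hjT : ∀ j ∈ T, 2 ≤ j := fun j hj => (Finset.mem_Icc.mp hj).1
  have ha1 : ∀ j ∈ T, (1:ℝ) ≤ a j := by
    intro j hj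
    show (1:ℝ) ≤ ((F k C j : ℚ) : ℝ)
    exact_mod_cast F_one_le k C j (hjT j hj) hC0
  have hb0 : ∀ j ∈ T, (0:ℝ) ≤ b j := by
    intro j hj
    show (0:ℝ) ≤ ((F k C' j : ℚ) : ℝ)
    exact_mod_cast F_nonneg k C' j (hjT j hj)
  set lam : ℝ := ∑ j ∈ T, b j with hlam
  have hlam0 : 0 ≤ lam := Finset.sum_nonneg hb0
  have hcast : ((∑ j ∈ T, F k C' j : ℚ) : ℝ) = lam := by
    rw [hlam, hb]
    push_cast
    rfl
  rw [hcast] at hM'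
  have hM'ge : e * lam + (M₁:ℝ) ≤ (M':ℝ) := by
    have h1 : e * lam ≤ (⌈e * lam⌉₊ : ℝ) := Nat.le_ceil _
    have h2 : (M' : ℝ) = (⌈e * lam⌉₊ : ℝ) + (M₁ : ℝ) := by
      exact_mod_cast congrArg (Nat.cast : ℕ → ℝ) hM'
    linarith
  -- key chain
  have hterm : ∀ S ∈ T.powerset, (0:ℝ) ≤ (∏ j ∈ S, a j) * ∏ j ∈ T \ S, (e * b j) := by
    intro S hS
    rw [Finset.mem_powerset] at hS
    apply mul_nonneg
    · exact Finset.prod_nonneg fun j hj => le_trans zero_le_one (ha1 j (hS hj))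
    · exact Finset.prod_nonneg fun j hj =>
        mul_nonneg (by linarith) (hb0 j (Finset.mem_sdiff.mp hj).1)
  have key : ∑ m ∈ Finset.Icc 1 N, ∑ S ∈ T.powersetCard (m - 1),
        (∏ j ∈ S, a j) * ∏ j ∈ T \ S, b j
      ≤ Real.exp (-(M':ℝ)) * ∑ S ∈ T.powerset,
        (∏ j ∈ S, a j) * ∏ j ∈ T \ S, (e * b j) := by
    rw [Finset.sum_powerset]
    have hsub : Finset.range N ⊆ Finset.range (T.card + 1) := by
      apply Finset.range_subset_range.mpr
      rw [hTcard]
      omega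
    calc ∑ m ∈ Finset.Icc 1 N, ∑ S ∈ T.powersetCard (m - 1),
          (∏ j ∈ S, a j) * ∏ j ∈ T \ S, b j
        = ∑ i ∈ Finset.range N, ∑ S ∈ T.powersetCard i,
          (∏ j ∈ S, a j) * ∏ j ∈ T \ S, b j := by
          have himg : Finset.Icc 1 N = Finset.image (· + 1) (Finset.range N) := by
            ext x
            simp only [Finset.mem_Icc, Finset.mem_image, Finset.mem_range]
            constructor
            · intro h; exact ⟨x - 1, by omega, by omega⟩
            · rintro ⟨y, hy, rfl⟩; omega
          rw [himg, Finset.sum_image (fun x _ y _ h => by omega)]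
          apply Finset.sum_congr rfl
          intro i _
          congr 1
      _ ≤ ∑ i ∈ Finset.range N, Real.exp (-(M':ℝ)) * ∑ S ∈ T.powersetCard i,
          (∏ j ∈ S, a j) * ∏ j ∈ T \ S, (e * b j) := by
          apply Finset.sum_le_sum
          intro i hi
          rw [Finset.mul_sum]
          apply Finset.sum_le_sum
          intro S hS
          rw [Finset.mem_powersetCard] at hS
          have hScard : (T \ S).card = n - 1 - i := by
            rw [Finset.card_sdiff_of_subset hS.1, hTcard, hS.2]
          have hcge : M' ≤ (T \ S).card := by
            rw [hScard]
            have := Finset.mem_range.mp hi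
            omega
          have hprod : ∏ j ∈ T \ S, (e * b j) = e ^ (T \ S).card * ∏ j ∈ T \ S, b j := by
            rw [Finset.prod_mul_distrib, Finset.prod_const]
          rw [hprod]
          have hpa : (0:ℝ) ≤ ∏ j ∈ S, a j :=
            Finset.prod_nonneg fun j hj => le_trans zero_le_one (ha1 j (hS.1 hj))
          have hpb : (0:ℝ) ≤ ∏ j ∈ T \ S, b j :=
            Finset.prod_nonneg fun j hj => hb0 j (Finset.mem_sdiff.mp hj).1
          have hfac : (1:ℝ) ≤ Real.exp (-(M':ℝ)) * e ^ (T \ S).card := by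
            rw [he, Real.exp_one_pow, ← Real.exp_add]
            apply Real.one_le_exp
            have : (M':ℝ) ≤ ((T \ S).card : ℝ) := by exact_mod_cast hcge
            linarith
          calc (∏ j ∈ S, a j) * ∏ j ∈ T \ S, b j
              = 1 * ((∏ j ∈ S, a j) * ∏ j ∈ T \ S, b j) := by ring
            _ ≤ (Real.exp (-(M':ℝ)) * e ^ (T \ S).card) *
                ((∏ j ∈ S, a j) * ∏ j ∈ T \ S, b j) :=
                mul_le_mul_of_nonneg_right hfac (mul_nonneg hpa hpb)
            _ = Real.exp (-(M':ℝ)) * ((∏ j ∈ S, a j) *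
                (e ^ (T \ S).card * ∏ j ∈ T \ S, b j)) := by ring
      _ ≤ ∑ i ∈ Finset.range (T.card + 1), Real.exp (-(M':ℝ)) * ∑ S ∈ T.powersetCard i,
          (∏ j ∈ S, a j) * ∏ j ∈ T \ S, (e * b j) := by
          apply Finset.sum_le_sum_of_subset_of_nonneg hsub
          intro i _ _
          apply mul_nonneg (Real.exp_nonneg _)
          apply Finset.sum_nonneg
          intro S hS
          exact hterm S (Finset.mem_powerset.mpr (Finset.mem_powersetCard.mp hS).1)
      _ = Real.exp (-(M':ℝ)) * ∑ i ∈ Finset.range (T.card + 1), ∑ S ∈ T.powersetCard i,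
          (∏ j ∈ S, a j) * ∏ j ∈ T \ S, (e * b j) := by
          rw [Finset.mul_sum]
  -- product identity and bounds
  have hprodadd : ∑ S ∈ T.powerset, (∏ j ∈ S, a j) * ∏ j ∈ T \ S, (e * b j)
      = ∏ j ∈ T, (a j + e * b j) := (Finset.prod_add a (fun j => e * b j) T).symm
  have hab : ∀ j ∈ T, a j + e * b j ≤ (a j + b j) * Real.exp ((e - 1) * b j) := by
    intro j hj
    have h1 := ha1 j hj
    have h2 := hb0 j hj
    have h3 := Real.add_one_le_exp ((e - 1) * b j)
    nlinarith [mul_nonneg (sub_nonneg.mpr he1) h2]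
  have hprodle : ∏ j ∈ T, (a j + e * b j)
      ≤ ∏ j ∈ T, ((a j + b j) * Real.exp ((e - 1) * b j)) := by
    apply Finset.prod_le_prod
    · intro j hj
      have h1 := ha1 j hj
      have h2 := hb0 j hj
      nlinarith
    · exact hab
  have hsplit : ∏ j ∈ T, ((a j + b j) * Real.exp ((e - 1) * b j))
      = (∏ j ∈ T, (a j + b j)) * Real.exp ((e - 1) * lam) := by
    rw [Finset.prod_mul_distrib, ← Real.exp_sum, hlam, Finset.mul_sum]
  have habn : ∏ j ∈ T, (a j + b j) = (n : ℝ) ^ k := by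
    have h1 : ∀ j ∈ T, a j + b j = ((((j:ℚ)/((j:ℚ)-1))^k : ℚ) : ℝ) := by
      intro j hj
      show ((F k C j : ℚ) : ℝ) + ((F k C' j : ℚ) : ℝ) = _
      rw [← Rat.cast_add, F_add k C hC j (hjT j hj)]
    have h2 : (∏ i ∈ T, ((i:ℚ)/((i:ℚ)-1))^k) = (n:ℚ)^k := by
      rw [Finset.prod_pow, hT, telescope n (by omega : 1 ≤ n)]
    rw [Finset.prod_congr rfl h1, ← Rat.cast_prod, h2]
    push_cast
    rfl
  have hfact : ((n - 1).factorial : ℝ) * (n : ℝ) = (n.factorial : ℝ) := by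
    exact_mod_cast congrArg (Nat.cast : ℕ → ℝ)
      ((mul_comm n (n-1).factorial) ▸ Nat.mul_factorial_pred (by omega : n ≠ 0))
  have hexp : Real.exp (-(M':ℝ)) * Real.exp ((e - 1) * lam) ≤ Real.exp (-(M₁:ℝ)) := by
    rw [← Real.exp_add]
    apply Real.exp_le_exp.mpr
    nlinarith
  calc ((n - 1).factorial : ℝ) ^ k *
        ∑ m ∈ Finset.Icc 1 N, ∑ S ∈ T.powersetCard (m - 1),
          (∏ j ∈ S, a j) * ∏ j ∈ T \ S, b j
      ≤ ((n - 1).factorial : ℝ) ^ k *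
        (Real.exp (-(M':ℝ)) * ∑ S ∈ T.powerset,
          (∏ j ∈ S, a j) * ∏ j ∈ T \ S, (e * b j)) := by
        apply mul_le_mul_of_nonneg_left key (by positivity)
    _ = ((n - 1).factorial : ℝ) ^ k *
        (Real.exp (-(M':ℝ)) * ∏ j ∈ T, (a j + e * b j)) := by rw [hprodadd]
    _ ≤ ((n - 1).factorial : ℝ) ^ k *
        (Real.exp (-(M':ℝ)) * ((n : ℝ) ^ k * Real.exp ((e - 1) * lam))) := by
        apply mul_le_mul_of_nonneg_left _ (by positivity)
        apply mul_le_mul_of_nonneg_left _ (Real.exp_nonneg _)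
        calc ∏ j ∈ T, (a j + e * b j)
            ≤ ∏ j ∈ T, ((a j + b j) * Real.exp ((e - 1) * b j)) := hprodle
          _ = (∏ j ∈ T, (a j + b j)) * Real.exp ((e - 1) * lam) := hsplit
          _ = (n : ℝ) ^ k * Real.exp ((e - 1) * lam) := by rw [habn]
    _ = (((n - 1).factorial : ℝ) * (n : ℝ)) ^ k *
        (Real.exp (-(M':ℝ)) * Real.exp ((e - 1) * lam)) := by
        rw [mul_pow]; ring
    _ ≤ (n.factorial : ℝ) ^ k * Real.exp (-(M₁:ℝ)) := by
        rw [hfact]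
        apply mul_le_mul_of_nonneg_left hexp (by positivity)
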